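/- arXiv:2208.01255 — 2 statements merged into one kernel-verified Lean document; each statement's English description precedes it below -/
import Mathlib

section
/- Let ℓ, m, n be positive integers, w ∈ S_{m,ℓ}, v ∈ S_{n,ℓ}, and let v₀ = w[n,ℓ]. If 1_m ⊞ v₀ ≤ (w ⊞ 1_n)·(1_m ⊞ v) in the Bruhat order on S_{m+n+ℓ}, then v = v₀. -/
/-- `u` is a minimal-length left coset representative in `S_{m,ℓ}`:
a permutation of `{1,…,m+ℓ}` (encoded `0`-indexed as `Fin (m + l)`) that is
strictly increasing on the first `m` values and on the last `l` values. -/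
def IsMinRep (m l : ℕ) (u : Equiv.Perm (Fin (m + l))) : Prop :=
  (∀ i j : Fin (m + l), i < j → (j : ℕ) < m → u i < u j) ∧
  (∀ i j : Fin (m + l), i < j → m ≤ (i : ℕ) → u i < u j)

/-- Transport a permutation of `Fin a` to a permutation of `Fin b` along `a = b`. -/
def permCast {a b : ℕ} (h : a = b) (u : Equiv.Perm (Fin a)) : Equiv.Perm (Fin b) :=
  Equiv.permCongr (finCongr h) u

/-- The concatenation `u ⊞ v` of permutations: it acts as `u` on the first `p`
values and as (the shift by `p` of) `v` on the last `q` values. -/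
def boxplus {p q : ℕ} (u : Equiv.Perm (Fin p)) (v : Equiv.Perm (Fin q)) :
    Equiv.Perm (Fin (p + q)) :=
  Equiv.permCongr finSumFinEquiv (Equiv.sumCongr u v)

/-- `w ⊞ 1_n`, viewed as a permutation of `{1,…,m+n+ℓ}`. -/
def bpFirst (m l n : ℕ) (w : Equiv.Perm (Fin (m + l))) : Equiv.Perm (Fin (m + n + l)) :=
  permCast (by omega) (boxplus w (1 : Equiv.Perm (Fin n)))

/-- `1_m ⊞ v`, viewed as a permutation of `{1,…,m+n+ℓ}`. -/
def bpSecond (m l n : ℕ) (v : Equiv.Perm (Fin (n + l))) : Equiv.Perm (Fin (m + n + l)) :=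
  permCast (by omega) (boxplus (1 : Equiv.Perm (Fin m)) v)

/-- The number of inversions (the length) of a permutation. -/
def invCount {N : ℕ} (u : Equiv.Perm (Fin N)) : ℕ :=
  (Finset.univ.filter (fun p : Fin N × Fin N => p.1 < p.2 ∧ u p.2 < u p.1)).card

/-- One step of the Bruhat order: `x = t·u` for a transposition `t`, with
`ℓ(u) < ℓ(x)`. -/
def BruhatStep {N : ℕ} (u x : Equiv.Perm (Fin N)) : Prop :=
  (∃ a b : Fin N, a ≠ b ∧ x = Equiv.swap a b * u) ∧ invCount u < invCount x

/-- The Bruhat order on the symmetric group: the order generated by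
`u < t·u` whenever `t` is a transposition and `ℓ(u) < ℓ(t·u)`. -/
def BruhatLE {N : ℕ} (u x : Equiv.Perm (Fin N)) : Prop :=
  Relation.ReflTransGen BruhatStep u x

/-- The permutation `w[n,ℓ]` of `{1,…,n+ℓ}` sending `k ↦ k + ℓ` for `k ≤ n`
and `k ↦ k - n` for `n < k`. -/
def wshift (n l : ℕ) : Equiv.Perm (Fin (n + l)) :=
  finSumFinEquiv.symm.trans ((Equiv.sumComm (Fin n) (Fin l)).trans
    (finSumFinEquiv.trans (finCongr (by omega))))

/-!
The rank count `r_u(I, K) = #{i < I | u i ≥ K}` is monotone in the Bruhat order: a transposition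
that raises the length is `u ↦ u * swap p q` with `p < q` and `u p < u q`, and moving the larger
value to the left cannot lower any rank count. For `1_m ⊞ w[n,ℓ]` the count `r(m + n, m + ℓ)`
takes its largest possible value `n`, i.e. every value `≥ m + ℓ` sits at a position `< m + n`;
hence the same holds for `x = (w ⊞ 1_n)(1_m ⊞ v)`. As `w ⊞ 1_n` fixes the values `≥ m + ℓ`,
`v` maps its last `ℓ` positions into `{0, …, ℓ - 1}`. An element of `S_{n,ℓ}` is determined by
the set of values on its last `ℓ` positions (its two blocks enumerate that set and its complement
increasingly), so `v = w[n,ℓ]`.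
-/

open Equiv Finset

section Counting

variable {N : ℕ}

theorem card_filter_le_val (K : ℕ) : #{y : Fin N | K ≤ (y : ℕ)} = N - K := by
  have := card_filter_add_card_filter_not (s := univ) fun y : Fin N => (y : ℕ) < K
  simp only [Fin.card_filter_val_lt, card_univ, Fintype.card_fin, not_lt] at this
  omega

theorem card_filter_le_apply (u : Perm (Fin N)) (K : ℕ) : #{i | K ≤ (u i : ℕ)} = N - K := by
  rw [← card_filter_le_val K]
  exact card_equiv u (by simp)

theorem Equiv.Perm.apply_notMem_of_forall_le_mem {n l : ℕ} (σ : Perm (Fin (n + l)))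
    {S : Finset (Fin (n + l))} (hS : #S = l) (h : ∀ i : Fin (n + l), n ≤ (i : ℕ) → σ i ∈ S)
    {i : Fin (n + l)} (hi : (i : ℕ) < n) : σ i ∉ S := by
  have hmap : ({j | n ≤ (j : ℕ)} : Finset (Fin (n + l))).map σ.toEmbedding = S :=
    eq_of_subset_of_card_le
      (fun _ hy => by obtain ⟨j, hj, rfl⟩ := mem_map.1 hy; exact h j (by simpa using hj))
      (by rw [card_map, card_filter_le_val, hS]; omega)
  rw [← hmap]
  simpa using hi

end Counting

section Bruhat

variable {N : ℕ}

def inversions (u : Perm (Fin N)) : Finset (Fin N × Fin N) :=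
  {z | z.1 < z.2 ∧ u z.2 < u z.1}

@[simp]
theorem mem_inversions {u : Perm (Fin N)} {z : Fin N × Fin N} :
    z ∈ inversions u ↔ z.1 < z.2 ∧ u z.2 < u z.1 := by
  simp [inversions]

theorem card_inversions (u : Perm (Fin N)) : #(inversions u) = invCount u := rfl

theorem invCount_lt_invCount_mul_swap (u : Perm (Fin N)) {p q : Fin N} (hpq : p < q)
    (hu : u p < u q) : invCount u < invCount (u * swap p q) := by
  set s := swap p q
  -- Transport an inversion along `s` unless that breaks `i < j`: the pairs `(p, j)` and `(i, q)`
  -- with `p < i, j < q` are inversions of `u * s` as they stand.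
  let φ : Fin N × Fin N → Fin N × Fin N := fun z => if s z.1 < s z.2 then (s z.1, s z.2) else z
  have hmaps : ∀ z ∈ inversions u, φ z ∈ (inversions (u * s)).erase (p, q) := by
    rintro ⟨i, j⟩ hz
    simp only [mem_inversions, mem_erase, Perm.mul_apply] at hz ⊢
    simp only [φ, s, swap_apply_def] at hz ⊢
    grind
  have hinj : Set.InjOn φ (inversions u) := by
    rintro ⟨i₁, j₁⟩ h₁ ⟨i₂, j₂⟩ h₂ h
    simp only [mem_coe, mem_inversions] at h₁ h₂
    simp only [φ, s] at h
    split_ifs at h <;> grind [swap_apply_self]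
  have hpq_mem : (p, q) ∈ inversions (u * s) := by simpa [s] using ⟨hpq, hu⟩
  rw [← card_inversions, ← card_inversions]
  exact (card_le_card_of_injOn φ hmaps hinj).trans_lt (card_erase_lt_of_mem hpq_mem)

theorem BruhatStep.exists_eq_mul_swap {u x : Perm (Fin N)} (h : BruhatStep u x) :
    ∃ p q, p < q ∧ u p < u q ∧ x = u * swap p q := by
  obtain ⟨⟨a, b, hab, rfl⟩, hlen⟩ := h
  have hne : u⁻¹ a ≠ u⁻¹ b := fun h => hab (u⁻¹.injective h)
  wlog hlt : u⁻¹ a < u⁻¹ b generalizing a b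
  · obtain ⟨p, q, hpq, hu, hx⟩ := this b a hab.symm (by rwa [swap_comm]) hne.symm
      (hne.lt_or_gt.resolve_left hlt)
    exact ⟨p, q, hpq, hu, by rw [swap_comm, hx]⟩
  rw [swap_mul_eq_mul_swap] at hlen ⊢
  refine ⟨_, _, hlt, ?_, rfl⟩
  by_contra! hle
  have := invCount_lt_invCount_mul_swap (u * swap (u⁻¹ a) (u⁻¹ b)) hlt (by
    simpa [Perm.mul_apply] using hle.lt_of_ne (fun h => hne (u.injective h.symm)))
  rw [mul_assoc, swap_mul_self, mul_one] at this
  omega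

def rankCount (u : Perm (Fin N)) (I K : ℕ) : ℕ :=
  #{i : Fin N | (i : ℕ) < I ∧ K ≤ (u i : ℕ)}

theorem rankCount_le_rankCount_mul_swap (u : Perm (Fin N)) {p q : Fin N} (hpq : p < q)
    (hu : u p < u q) (I K : ℕ) : rankCount u I K ≤ rankCount (u * swap p q) I K := by
  set s := swap p q
  -- Only `q` can drop out (when `u p < K ≤ u q`), and then `p` comes in.
  let ψ : Fin N → Fin N := fun i => if K ≤ ((u * s) i : ℕ) then i else s i
  refine card_le_card_of_injOn ψ (fun i hi => ?_) (fun i₁ h₁ i₂ h₂ h => ?_)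
  · simp only [coe_filter, mem_univ, true_and, Set.mem_ofPred_eq] at hi ⊢
    simp only [ψ, s, Perm.mul_apply, swap_apply_def, Fin.lt_def] at hi hu hpq ⊢
    grind
  · simp only [coe_filter, mem_univ, true_and, Set.mem_ofPred_eq] at h₁ h₂
    simp only [ψ, s, Perm.mul_apply] at h
    split_ifs at h <;> grind [swap_apply_self]

theorem BruhatLE.rankCount_le {u x : Perm (Fin N)} (h : BruhatLE u x) (I K : ℕ) :
    rankCount u I K ≤ rankCount x I K := by
  induction h with
  | refl => rfl
  | tail _ hstep ih =>
    obtain ⟨p, q, hpq, hu, rfl⟩ := hstep.exists_eq_mul_swap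
    exact ih.trans (rankCount_le_rankCount_mul_swap _ hpq hu I K)

theorem sub_le_rankCount_iff (u : Perm (Fin N)) (I K : ℕ) :
    N - K ≤ rankCount u I K ↔ ∀ i, K ≤ (u i : ℕ) → (i : ℕ) < I := by
  have : rankCount u I K =
      #(({i | K ≤ (u i : ℕ)} : Finset (Fin N)).filter fun i : Fin N => (i : ℕ) < I) := by
    simp only [rankCount, filter_filter, and_comm]
  rw [this, ← card_filter_le_apply u K, (card_filter_le _ _).ge_iff_eq, card_filter_eq_iff]
  simp

theorem BruhatLE.lt_of_le_apply {u x : Perm (Fin N)} (h : BruhatLE u x) {I K : ℕ}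
    (hu : ∀ i, K ≤ (u i : ℕ) → (i : ℕ) < I) : ∀ i, K ≤ (x i : ℕ) → (i : ℕ) < I :=
  (sub_le_rankCount_iff x I K).1 <| ((sub_le_rankCount_iff u I K).2 hu).trans (h.rankCount_le I K)

end Bruhat

namespace IsMinRep

variable {n l : ℕ} {u u' : Perm (Fin (n + l))}

theorem strictMono_castAdd (hu : IsMinRep n l u) : StrictMono (u ∘ Fin.castAdd l) :=
  fun i j hij => hu.1 _ _ hij (by simp)

theorem strictMono_natAdd (hu : IsMinRep n l u) : StrictMono (u ∘ Fin.natAdd n) :=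
  fun i j hij => hu.2 _ _ (by simpa using hij) (by simp)

theorem eq_of_forall_le_mem (hu : IsMinRep n l u) (hu' : IsMinRep n l u')
    {S : Finset (Fin (n + l))} (hS : #S = l) (h : ∀ i : Fin (n + l), n ≤ (i : ℕ) → u i ∈ S)
    (h' : ∀ i : Fin (n + l), n ≤ (i : ℕ) → u' i ∈ S) : u = u' := by
  have hSc : #Sᶜ = n := by rw [card_compl, Fintype.card_fin, hS]; omega
  have hsecond : ⇑u ∘ Fin.natAdd n = ⇑u' ∘ Fin.natAdd n :=
    (orderEmbOfFin_unique hS (fun d => h _ (by simp)) hu.strictMono_natAdd).trans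
      (orderEmbOfFin_unique hS (fun d => h' _ (by simp)) hu'.strictMono_natAdd).symm
  have hfirst : ⇑u ∘ Fin.castAdd l = ⇑u' ∘ Fin.castAdd l :=
    (orderEmbOfFin_unique hSc (fun d => mem_compl.2 (u.apply_notMem_of_forall_le_mem hS h
        (by simp))) hu.strictMono_castAdd).trans
      (orderEmbOfFin_unique hSc (fun d => mem_compl.2 (u'.apply_notMem_of_forall_le_mem hS h'
        (by simp))) hu'.strictMono_castAdd).symm
  ext1 i
  exact Fin.addCases (congrFun hfirst) (congrFun hsecond) i

end IsMinRep

section Blocks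

theorem permCast_apply_val {a b : ℕ} (h : a = b) (u : Perm (Fin a)) (i : Fin b) :
    (permCast h u i : ℕ) = u ⟨i, h ▸ i.isLt⟩ := rfl

theorem boxplus_apply_of_le {p q : ℕ} (u : Perm (Fin p)) (v : Perm (Fin q)) (i : Fin (p + q))
    (h : p ≤ (i : ℕ)) : (boxplus u v i : ℕ) = p + v ⟨i - p, by omega⟩ := by
  obtain ⟨i, rfl⟩ : ∃ i' : Fin q, Fin.natAdd p i' = i := ⟨⟨i - p, by omega⟩, by ext; simp; omega⟩
  simp [boxplus]

variable {m l n : ℕ}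

theorem bpFirst_apply_of_le (w : Perm (Fin (m + l))) (i : Fin (m + n + l))
    (h : m + l ≤ (i : ℕ)) : (bpFirst m l n w i : ℕ) = i := by
  rw [bpFirst, permCast_apply_val, boxplus_apply_of_le _ _ _ h, Perm.one_apply]
  simp only
  omega

theorem bpSecond_apply_of_le (v : Perm (Fin (n + l))) (i : Fin (m + n + l))
    (h : m ≤ (i : ℕ)) : (bpSecond m l n v i : ℕ) = m + v ⟨i - m, by omega⟩ := by
  rw [bpSecond, permCast_apply_val, boxplus_apply_of_le _ _ _ h]

theorem wshift_apply_of_lt (i : Fin (n + l)) (h : (i : ℕ) < n) :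
    (wshift n l i : ℕ) = i + l := by
  obtain ⟨i, rfl⟩ : ∃ i' : Fin n, Fin.castAdd l i' = i := ⟨⟨i, h⟩, rfl⟩
  simp [wshift, add_comm]

theorem wshift_apply_of_le (i : Fin (n + l)) (h : n ≤ (i : ℕ)) :
    (wshift n l i : ℕ) = i - n := by
  obtain ⟨i, rfl⟩ : ∃ i' : Fin l, Fin.natAdd n i' = i := ⟨⟨i - n, by omega⟩, by ext; simp; omega⟩
  simp [wshift]

theorem isMinRep_wshift (n l : ℕ) : IsMinRep n l (wshift n l) := by
  constructor
  · intro i j hij hj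
    rw [Fin.lt_def, wshift_apply_of_lt i (by omega), wshift_apply_of_lt j hj]
    omega
  · intro i j hij hi
    rw [Fin.lt_def, wshift_apply_of_le i hi, wshift_apply_of_le j (by omega)]
    omega

end Blocks

theorem bpSecond_wshift_lt_of_le_apply {m l n : ℕ} (i : Fin (m + n + l))
    (h : m + l ≤ (bpSecond m l n (wshift n l) i : ℕ)) : (i : ℕ) < m + n := by
  by_contra! hi
  rw [bpSecond_apply_of_le _ _ (by omega), wshift_apply_of_le _ (by simp only; omega)] at h
  simp only at h
  omega

theorem eq_wshift_of_bruhatLE_general (l m n : ℕ)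
    (w : Equiv.Perm (Fin (m + l)))
    (v : Equiv.Perm (Fin (n + l))) (hv : IsMinRep n l v)
    (h : BruhatLE (bpSecond m l n (wshift n l)) (bpFirst m l n w * bpSecond m l n v)) :
    v = wshift n l := by
  have hx := h.lt_of_le_apply bpSecond_wshift_lt_of_le_apply
  refine hv.eq_of_forall_le_mem (isMinRep_wshift n l) (S := {y | (y : ℕ) < l})
    (by simp [Fin.card_filter_val_lt]) (fun b hb => ?_) (fun b hb => ?_)
  · by_contra hvb
    simp only [mem_filter, mem_univ, true_and, not_lt] at hvb
    have hval : (bpSecond m l n v ⟨m + b, by omega⟩ : ℕ) = m + v b := by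
      rw [bpSecond_apply_of_le _ _ (by simp)]
      simp
    have := hx ⟨m + b, by omega⟩ (by rw [Perm.mul_apply, bpFirst_apply_of_le _ _ (by omega)]; omega)
    simp only at this
    omega
  · simp only [mem_filter, mem_univ, wshift_apply_of_le b hb, true_and]
    omega

/-- For `w ∈ S_{m,ℓ}`, `v ∈ S_{n,ℓ}` and `v₀ = w[n,ℓ]`: if
`1_m ⊞ v₀ ≤ (w ⊞ 1_n)·(1_m ⊞ v)` in the Bruhat order on `S_{m+n+ℓ}`,
then `v = v₀`. -/
theorem eq_wshift_of_bruhatLE (l m n : ℕ) (hl : 0 < l) (hm : 0 < m) (hn : 0 < n)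
    (w : Equiv.Perm (Fin (m + l))) (hw : IsMinRep m l w)
    (v : Equiv.Perm (Fin (n + l))) (hv : IsMinRep n l v)
    (h : BruhatLE (bpSecond m l n (wshift n l)) (bpFirst m l n w * bpSecond m l n v)) :
    v = wshift n l :=
  eq_wshift_of_bruhatLE_general l m n w v hv h
end

section
/- Let a, n, b be nonnegative integers with a+n+b ≥ 1, and let v be a permutation of {1,…,a+n+b} such that v(j) = j for every j with a < j ≤ a+n, and such that v⁻¹ is strictly increasing on {1,…,a} and on {a+n+1,…,a+n+b}. Let k = #{s : 1 ≤ s ≤ a and v⁻¹(s) > a+n}. Then k also equals #{t : a+n < t ≤ a+n+b and v⁻¹(t) ≤ a}, and the following four identities hold: {1,…,a} ∩ v({1,…,a}) = {1,…,a−k}; {1,…,a} ∩ v({a+n+1,…,a+n+b}) = {a−k+1,…,a}; {a+n+1,…,a+n+b} ∩ v({1,…,a}) = {a+n+1,…,a+n+k}; and {a+n+1,…,a+n+b} ∩ v({a+n+1,…,a+n+b}) = {a+n+k+1,…,a+n+b}. -/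
/-
The permutation `w = v⁻¹` fixes the middle block, hence maps the outer blocks `A = [0, a)` and
`B = [a+n, N)` into their union. Being increasing on `A`, the points of `A` that `w` sends to `B`
form a terminal segment of `A`; dually the points of `B` sent to `A` form an initial segment of
`B`. The two segments have the same size, since `#A = #v(A)` gives
`#(A ∩ v A) + #(A ∩ v B) = #A = #(A ∩ v A) + #(B ∩ v A)`. This determines all four
intersections.
-/

/-- The block of `0`-indexed positions `[lo, hi)` in `Fin N`, i.e. the
`1`-indexed interval `{lo+1, …, hi}`. -/
def blk (N lo hi : ℕ) : Finset (Fin N) :=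
  Finset.univ.filter (fun i : Fin N => lo ≤ (i : ℕ) ∧ (i : ℕ) < hi)

open Finset

section Blocks

variable {N : ℕ}

@[simp]
lemma mem_blk {lo hi : ℕ} {x : Fin N} :
    x ∈ blk N lo hi ↔ lo ≤ (x : ℕ) ∧ (x : ℕ) < hi := by
  simp [blk]

lemma card_blk {lo hi : ℕ} (h : hi ≤ N) : #(blk N lo hi) = hi - lo := by
  have hlt : ∀ m ∈ Ico lo hi, m < N := fun m hm => (mem_Ico.1 hm).2.trans_le h
  have : blk N lo hi = (Ico lo hi).attachFin hlt := by
    ext x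
    simp
  rw [this, card_attachFin, Nat.card_Ico]

lemma eq_blk_of_up_closed {hi : ℕ} {S : Finset (Fin N)} (hhi : hi ≤ N)
    (hS : ∀ x ∈ S, (x : ℕ) < hi)
    (hup : ∀ x ∈ S, ∀ y : Fin N, x ≤ y → (y : ℕ) < hi → y ∈ S) :
    S = blk N (hi - #S) hi := by
  ext x
  rw [mem_blk]
  constructor
  · intro hx
    have hsub : blk N x hi ⊆ S := fun y hy =>
      hup x hx y (Fin.le_def.2 (mem_blk.1 hy).1) (mem_blk.1 hy).2
    have := card_le_card hsub
    rw [card_blk hhi] at this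
    have := hS x hx
    omega
  · rintro ⟨hlo, hxhi⟩
    by_contra hx
    have hsub : S ⊆ blk N (x + 1) hi := fun y hy => by
      refine mem_blk.2 ⟨?_, hS y hy⟩
      by_contra hyx
      exact hx (hup y hy x (Fin.le_def.2 (by omega)) hxhi)
    have := card_le_card hsub
    rw [card_blk hhi] at this
    omega

lemma eq_blk_of_down_closed {lo : ℕ} {S : Finset (Fin N)}
    (hS : ∀ x ∈ S, lo ≤ (x : ℕ))
    (hdown : ∀ x ∈ S, ∀ y : Fin N, lo ≤ (y : ℕ) → y ≤ x → y ∈ S) :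
    S = blk N lo (lo + #S) := by
  ext x
  rw [mem_blk]
  constructor
  · intro hx
    have hsub : blk N lo (x + 1) ⊆ S := fun y hy =>
      hdown x hx y (mem_blk.1 hy).1 (Fin.le_def.2 (Nat.lt_succ_iff.1 (mem_blk.1 hy).2))
    have := card_le_card hsub
    rw [card_blk x.isLt] at this
    have := hS x hx
    omega
  · rintro ⟨hlo, hxhi⟩
    by_contra hx
    have hsub : S ⊆ blk N lo x := fun y hy => by
      refine mem_blk.2 ⟨hS y hy, ?_⟩
      by_contra hyx
      exact hx (hdown y hy x hlo (Fin.le_def.2 (by omega)))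
    have := card_le_card hsub
    rw [card_blk x.isLt.le] at this
    omega

lemma blk_sdiff_blk_of_le_right {lo m hi : ℕ} (h : m ≤ hi) :
    blk N lo hi \ blk N m hi = blk N lo m := by
  ext x
  simp only [mem_sdiff, mem_blk]
  omega

lemma blk_sdiff_blk_of_le_left {lo m hi : ℕ} (h : lo ≤ m) :
    blk N lo hi \ blk N lo m = blk N m hi := by
  ext x
  simp only [mem_sdiff, mem_blk]
  omega

lemma disjoint_blk {lo hi lo' hi' : ℕ} (h : hi ≤ lo') :
    Disjoint (blk N lo hi) (blk N lo' hi') :=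
  disjoint_left.2 fun x hx hx' => by
    simp only [mem_blk] at hx hx'
    omega

end Blocks

section Perm

variable {α : Type*}

lemma symm_apply_mem_iff_of_forall_fixed {σ : Equiv.Perm α} {p : α → Prop}
    (h : ∀ x, p x → σ x = x) (x : α) : p (σ.symm x) ↔ p x := by
  constructor
  · intro hx
    have := h _ hx
    rw [Equiv.apply_symm_apply] at this
    rwa [← this] at hx
  · intro hx
    rwa [σ.symm_apply_eq.2 (h x hx).symm]

variable [DecidableEq α]

lemma mem_image_perm_iff {σ : Equiv.Perm α} {s : Finset α} {x : α} :
    x ∈ s.image σ ↔ σ.symm x ∈ s :=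
  ⟨fun h => by obtain ⟨y, hy, rfl⟩ := mem_image.1 h; simpa using hy,
    fun h => mem_image.2 ⟨_, h, σ.apply_symm_apply x⟩⟩

lemma inter_image_perm_eq_sdiff {σ : Equiv.Perm α} {s t : Finset α}
    (hst : Disjoint s t) (hσ : (s ∪ t).image σ = s ∪ t) :
    s ∩ s.image σ = s \ (s ∩ t.image σ) := by
  ext x
  simp only [mem_inter, mem_sdiff, not_and]
  constructor
  · rintro ⟨hs, hσs⟩
    exact ⟨hs, fun _ hσt => disjoint_left.1 ((disjoint_image σ.injective).2 hst) hσs hσt⟩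
  · rintro ⟨hs, hσt⟩
    have hx : x ∈ (s ∪ t).image σ := by rw [hσ]; exact mem_union_left t hs
    rw [image_union, mem_union] at hx
    exact ⟨hs, hx.resolve_right (hσt hs)⟩

lemma card_inter_image_perm_comm {σ : Equiv.Perm α} {s t : Finset α}
    (hst : Disjoint s t) (hσ : (s ∪ t).image σ = s ∪ t) :
    #(s ∩ t.image σ) = #(t ∩ s.image σ) := by
  have himg : Disjoint (s.image σ) (t.image σ) := (disjoint_image σ.injective).2 hst
  have hs : #(s ∩ s.image σ) + #(s ∩ t.image σ) = #s := by
    rw [← card_union_of_disjoint (himg.mono inter_subset_right inter_subset_right),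
      ← inter_union_distrib_left, ← image_union, hσ, inter_eq_left.2 subset_union_left]
  have hσs : #(s ∩ s.image σ) + #(t ∩ s.image σ) = #s := by
    rw [← card_union_of_disjoint (hst.mono inter_subset_left inter_subset_left),
      ← union_inter_distrib_right,
      inter_eq_right.2 (hσ ▸ image_subset_image subset_union_left),
      card_image_of_injective _ σ.injective]
  omega

end Perm

section BlockPermutation

variable {a n b : ℕ} {v : Equiv.Perm (Fin (a + n + b))}

lemma image_blk_first_union_blk_last
    (hfix : ∀ j : Fin (a + n + b), a ≤ (j : ℕ) → (j : ℕ) < a + n → v j = j) :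
    (blk (a + n + b) 0 a ∪ blk (a + n + b) (a + n) (a + n + b)).image v
      = blk (a + n + b) 0 a ∪ blk (a + n + b) (a + n) (a + n + b) := by
  ext x
  have hmid := symm_apply_mem_iff_of_forall_fixed
    (p := fun y : Fin (a + n + b) => a ≤ (y : ℕ) ∧ (y : ℕ) < a + n)
    (fun y hy => hfix y hy.1 hy.2) x
  have := (v.symm x).isLt
  simp only [mem_image_perm_iff, mem_union, mem_blk] at hmid ⊢
  omega

lemma filter_eq_blk_first_inter_image_blk_last :
    univ.filter (fun s : Fin (a + n + b) => (s : ℕ) < a ∧ a + n ≤ (v.symm s : ℕ))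
      = blk (a + n + b) 0 a ∩ (blk (a + n + b) (a + n) (a + n + b)).image v := by
  ext x
  have := (v.symm x).isLt
  simp only [mem_filter, mem_univ, true_and, mem_inter, mem_image_perm_iff, mem_blk]
  omega

lemma filter_eq_blk_last_inter_image_blk_first :
    univ.filter (fun t : Fin (a + n + b) => a + n ≤ (t : ℕ) ∧ (v.symm t : ℕ) < a)
      = blk (a + n + b) (a + n) (a + n + b) ∩ (blk (a + n + b) 0 a).image v := by
  ext x
  simp only [mem_filter, mem_univ, true_and, mem_inter, mem_image_perm_iff, mem_blk]
  omega

lemma blk_first_inter_image_blk_last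
    (hinc1 : ∀ i j : Fin (a + n + b), i < j → (j : ℕ) < a → v.symm i < v.symm j) :
    blk (a + n + b) 0 a ∩ (blk (a + n + b) (a + n) (a + n + b)).image v
      = blk (a + n + b)
          (a - #(blk (a + n + b) 0 a ∩ (blk (a + n + b) (a + n) (a + n + b)).image v)) a := by
  refine eq_blk_of_up_closed (by omega) (fun x hx => (mem_blk.1 (mem_inter.1 hx).1).2) ?_
  intro x hx y hxy hy
  simp only [mem_inter, mem_image_perm_iff, mem_blk] at hx ⊢
  rcases hxy.lt_or_eq with hlt | rfl
  · have := Fin.lt_def.1 (hinc1 x y hlt hy)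
    have := (v.symm y).isLt
    omega
  · exact hx

lemma blk_last_inter_image_blk_first
    (hinc2 : ∀ i j : Fin (a + n + b), i < j → a + n ≤ (i : ℕ) → v.symm i < v.symm j) :
    blk (a + n + b) (a + n) (a + n + b) ∩ (blk (a + n + b) 0 a).image v
      = blk (a + n + b) (a + n)
          (a + n + #(blk (a + n + b) (a + n) (a + n + b) ∩ (blk (a + n + b) 0 a).image v)) := by
  refine eq_blk_of_down_closed (fun x hx => (mem_blk.1 (mem_inter.1 hx).1).1) ?_
  intro x hx y hy hyx
  simp only [mem_inter, mem_image_perm_iff, mem_blk] at hx ⊢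
  rcases hyx.lt_or_eq with hlt | rfl
  · have := Fin.lt_def.1 (hinc2 y x hlt hy)
    omega
  · exact hx

end BlockPermutation

theorem block_image_inter_general (a n b : ℕ)
    (v : Equiv.Perm (Fin (a + n + b)))
    (hfix : ∀ j : Fin (a + n + b), a ≤ (j : ℕ) → (j : ℕ) < a + n → v j = j)
    (hinc1 : ∀ i j : Fin (a + n + b), i < j → (j : ℕ) < a → v.symm i < v.symm j)
    (hinc2 : ∀ i j : Fin (a + n + b), i < j → a + n ≤ (i : ℕ) → v.symm i < v.symm j)
    (k : ℕ)
    (hk : k = (Finset.univ.filter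
      (fun s : Fin (a + n + b) => (s : ℕ) < a ∧ a + n ≤ ((v.symm s : Fin (a + n + b)) : ℕ))).card) :
    k = (Finset.univ.filter
        (fun t : Fin (a + n + b) =>
          a + n ≤ (t : ℕ) ∧ ((v.symm t : Fin (a + n + b)) : ℕ) < a)).card ∧
    blk (a + n + b) 0 a ∩ Finset.image (fun i => v i) (blk (a + n + b) 0 a)
      = blk (a + n + b) 0 (a - k) ∧
    blk (a + n + b) 0 a ∩ Finset.image (fun i => v i) (blk (a + n + b) (a + n) (a + n + b))
      = blk (a + n + b) (a - k) a ∧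
    blk (a + n + b) (a + n) (a + n + b) ∩ Finset.image (fun i => v i) (blk (a + n + b) 0 a)
      = blk (a + n + b) (a + n) (a + n + k) ∧
    blk (a + n + b) (a + n) (a + n + b) ∩
        Finset.image (fun i => v i) (blk (a + n + b) (a + n) (a + n + b))
      = blk (a + n + b) (a + n + k) (a + n + b) := by
  set A := blk (a + n + b) 0 a
  set B := blk (a + n + b) (a + n) (a + n + b)
  have hdisj : Disjoint A B := disjoint_blk (Nat.le_add_right a n)
  have houter : (A ∪ B).image v = A ∪ B := image_blk_first_union_blk_last hfix
  have hkAB : k = #(A ∩ B.image v) :=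
    hk.trans (congrArg card filter_eq_blk_first_inter_image_blk_last)
  have hkBA : k = #(B ∩ A.image v) := hkAB.trans (card_inter_image_perm_comm hdisj houter)
  have hAB : A ∩ B.image v = blk (a + n + b) (a - k) a :=
    hkAB ▸ blk_first_inter_image_blk_last hinc1
  have hBA : B ∩ A.image v = blk (a + n + b) (a + n) (a + n + k) :=
    hkBA ▸ blk_last_inter_image_blk_first hinc2
  refine ⟨hkBA.trans (congrArg card filter_eq_blk_last_inter_image_blk_first).symm,
    ?_, hAB, hBA, ?_⟩
  · rw [inter_image_perm_eq_sdiff hdisj houter, hAB, blk_sdiff_blk_of_le_right (Nat.sub_le a k)]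
  · rw [inter_image_perm_eq_sdiff hdisj.symm (union_comm A B ▸ houter), hBA,
      blk_sdiff_blk_of_le_left (Nat.le_add_right _ k)]

/-- Let `v` be a permutation of `{1,…,a+n+b}` (encoded `0`-indexed) fixing the
middle block pointwise, with `v⁻¹` strictly increasing on the first block
`{1,…,a}` and on the last block `{a+n+1,…,a+n+b}`.  Let
`k = #{s ≤ a : v⁻¹(s) > a+n}`.  Then `k = #{t > a+n : v⁻¹(t) ≤ a}` and the four
intersection identities of blocks with images of blocks hold. -/
theorem block_image_inter (a n b : ℕ) (hpos : 1 ≤ a + n + b)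
    (v : Equiv.Perm (Fin (a + n + b)))
    (hfix : ∀ j : Fin (a + n + b), a ≤ (j : ℕ) → (j : ℕ) < a + n → v j = j)
    (hinc1 : ∀ i j : Fin (a + n + b), i < j → (j : ℕ) < a → v.symm i < v.symm j)
    (hinc2 : ∀ i j : Fin (a + n + b), i < j → a + n ≤ (i : ℕ) → v.symm i < v.symm j)
    (k : ℕ)
    (hk : k = (Finset.univ.filter
      (fun s : Fin (a + n + b) => (s : ℕ) < a ∧ a + n ≤ ((v.symm s : Fin (a + n + b)) : ℕ))).card) :
    k = (Finset.univ.filter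
        (fun t : Fin (a + n + b) =>
          a + n ≤ (t : ℕ) ∧ ((v.symm t : Fin (a + n + b)) : ℕ) < a)).card ∧
    blk (a + n + b) 0 a ∩ Finset.image (fun i => v i) (blk (a + n + b) 0 a)
      = blk (a + n + b) 0 (a - k) ∧
    blk (a + n + b) 0 a ∩ Finset.image (fun i => v i) (blk (a + n + b) (a + n) (a + n + b))
      = blk (a + n + b) (a - k) a ∧
    blk (a + n + b) (a + n) (a + n + b) ∩ Finset.image (fun i => v i) (blk (a + n + b) 0 a)
      = blk (a + n + b) (a + n) (a + n + k) ∧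
    blk (a + n + b) (a + n) (a + n + b) ∩
        Finset.image (fun i => v i) (blk (a + n + b) (a + n) (a + n + b))
      = blk (a + n + b) (a + n + k) (a + n + b) :=
  block_image_inter_general a n b v hfix hinc1 hinc2 k hk
end
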